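/- Let (v_j)_{j=1,…,n} be vectors in an inner product space depending Lipschitz-continuously on a parameter g in a metric space (i.e., ‖v_j(g₁) − v_j(g₂)‖ ≤ L·d(g₁,g₂)), such that the Gram matrix G(g) = (⟨v_i(g), v_j(g)⟩) is uniformly positive definite. Then the orthonormal basis obtained by Gram–Schmidt orthonormalization also depends Lipschitz-continuously on g (with a possibly larger constant), locally on the parameter space. -/

import Mathlib

/-!
The Gram–Schmidt vector `u j = v j - ∑ i < j, ⟪e i, v j⟫ • e i` equals `v j` plus a combination
of the earlier `v i`, so uniform positivity of the Gram matrix gives `‖u j‖ ≥ √lam`. On a ball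
the `v j` are bounded, hence by induction on `j` each `u j` is Lipschitz once the earlier unit
vectors `e i` are, and `x ↦ ‖x‖⁻¹ • x` is `2 / √lam`-Lipschitz where `‖x‖ ≥ √lam`.
-/

open Finset InnerProductSpace Submodule
open scoped NNReal

section GramSchmidt

variable {𝕜 E ι : Type*} [RCLike 𝕜] [NormedAddCommGroup E] [InnerProductSpace 𝕜 E]
  [LinearOrder ι] [LocallyFiniteOrderBot ι] [WellFoundedLT ι]

theorem norm_gramSchmidtNormed_le_one (f : ι → E) (n : ι) : ‖gramSchmidtNormed 𝕜 f n‖ ≤ 1 := by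
  by_cases h : gramSchmidtNormed 𝕜 f n = 0
  · simp [h]
  · exact (gramSchmidtNormed_unit_length' h).le

theorem gramSchmidt_eq_sub_sum_inner_smul (f : ι → E) (n : ι) :
    gramSchmidt 𝕜 f n =
      f n - ∑ i ∈ Iio n, ⟪gramSchmidtNormed 𝕜 f i, f n⟫_𝕜 • gramSchmidtNormed 𝕜 f i := by
  rw [eq_sub_iff_add_eq]
  conv_rhs => rw [gramSchmidt_def'' 𝕜 f n]
  congr 1
  refine sum_congr rfl fun i _ => ?_
  simp only [gramSchmidtNormed, inner_smul_left, smul_smul, map_inv₀, RCLike.conj_ofReal]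
  congr 1
  by_cases h : gramSchmidt 𝕜 f i = 0
  · simp [h]
  · field_simp

theorem exists_gramSchmidt_eq_sum_smul [Fintype ι] (f : ι → E) (j : ι) :
    ∃ d : ι → 𝕜, d j = 1 ∧ gramSchmidt 𝕜 f j = ∑ i, d i • f i := by
  classical
  have hmem : f j - gramSchmidt 𝕜 f j ∈ span 𝕜 (f '' Set.Iio j) := by
    rw [gramSchmidt_def, sub_sub_cancel, ← span_gramSchmidt_Iio]
    refine sum_mem fun i hi => ?_
    refine span_mono (Set.singleton_subset_iff.2 (Set.mem_image_of_mem _ ?_))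
      (starProjection_apply_mem _ _)
    simpa using hi
  obtain ⟨l, hl, hlf⟩ := Finsupp.mem_span_image_iff_linearCombination 𝕜 |>.1 hmem
  refine ⟨⇑(Finsupp.single j (1 : 𝕜) - l), ?_, ?_⟩
  · simp [(Finsupp.mem_supported' 𝕜 l).1 hl j (lt_irrefl j)]
  · calc gramSchmidt 𝕜 f j = Finsupp.linearCombination 𝕜 f (Finsupp.single j 1 - l) := by
          simp [hlf]
      _ = _ := Finsupp.linearCombination_apply .. |>.trans (Finsupp.sum_fintype _ _ (by simp))

end GramSchmidt

section Lipschitz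

variable {α ι : Type*} {s : Set α}

theorem LipschitzOnWith.finset_sum {E : Type*} [PseudoEMetricSpace α] [SeminormedAddCommGroup E]
    {t : Finset ι} {f : ι → α → E} {K : ι → ℝ≥0} (h : ∀ i ∈ t, LipschitzOnWith (K i) (f i) s) :
    LipschitzOnWith (∑ i ∈ t, K i) (fun x => ∑ i ∈ t, f i x) s := by
  classical
  induction t using Finset.induction_on with
  | empty => simpa using (LipschitzWith.const (0 : E)).lipschitzOnWith (s := s)
  | insert a t ha ih =>
    simp_rw [sum_insert ha]
    exact (h a (mem_insert_self a t)).add (ih fun i hi => h i (mem_insert_of_mem hi))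

theorem exists_forall_lipschitzOnWith {β : Type*} [PseudoEMetricSpace α] [PseudoEMetricSpace β]
    {t : Finset ι} {f : ι → α → β} (h : ∀ i ∈ t, ∃ K, LipschitzOnWith K (f i) s) :
    ∃ K, ∀ i ∈ t, LipschitzOnWith K (f i) s := by
  choose! K hK using h
  exact ⟨t.sup K, fun i hi => (hK i hi).weaken (le_sup hi)⟩

theorem LipschitzWith.norm_le_norm_add_mul_dist [PseudoMetricSpace α] {E : Type*}
    [SeminormedAddCommGroup E] {f : α → E} {K : ℝ≥0} (hf : LipschitzWith K f) (x y : α) :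
    ‖f x‖ ≤ ‖f y‖ + K * dist x y := by
  grw [norm_le_norm_add_norm_sub' (f x) (f y), ← dist_eq_norm, hf.dist_le_mul x y]

theorem norm_inv_norm_smul_sub_inv_norm_smul_le {E : Type*} [NormedAddCommGroup E]
    [NormedSpace ℝ E] {x y : E} {r : ℝ} (hr : 0 < r) (hx : r ≤ ‖x‖) (hy : r ≤ ‖y‖) :
    ‖‖x‖⁻¹ • x - ‖y‖⁻¹ • y‖ ≤ 2 / r * ‖x - y‖ := by
  have hx₀ : 0 < ‖x‖ := hr.trans_le hx
  have hy₀ : 0 < ‖y‖ := hr.trans_le hy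
  have hscale : ‖(‖x‖⁻¹ - ‖y‖⁻¹) • y‖ = |‖x‖ - ‖y‖| / ‖x‖ := by
    rw [norm_smul, Real.norm_eq_abs, inv_sub_inv hx₀.ne' hy₀.ne', abs_div,
      abs_of_pos (mul_pos hx₀ hy₀), abs_sub_comm]
    field_simp
  calc ‖‖x‖⁻¹ • x - ‖y‖⁻¹ • y‖ = ‖‖x‖⁻¹ • (x - y) + (‖x‖⁻¹ - ‖y‖⁻¹) • y‖ := by
        congr 1; module
    _ ≤ ‖x‖⁻¹ * ‖x - y‖ + |‖x‖ - ‖y‖| / ‖x‖ := by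
        grw [norm_add_le, norm_smul, hscale, Real.norm_of_nonneg (inv_nonneg.2 hx₀.le)]
    _ ≤ ‖x‖⁻¹ * ‖x - y‖ + ‖x - y‖ / ‖x‖ := by grw [abs_norm_sub_norm_le]
    _ = 2 * ‖x - y‖ / ‖x‖ := by ring
    _ ≤ 2 / r * ‖x - y‖ := by
        rw [div_mul_eq_mul_div]; gcongr

theorem LipschitzOnWith.inv_norm_smul [PseudoMetricSpace α] {E : Type*} [NormedAddCommGroup E]
    [NormedSpace ℝ E] {f : α → E} {K r : ℝ≥0} (hf : LipschitzOnWith K f s) (hr : 0 < r)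
    (hfr : ∀ x ∈ s, r ≤ ‖f x‖) : LipschitzOnWith (2 / r * K) (fun x => ‖f x‖⁻¹ • f x) s :=
  LipschitzOnWith.of_dist_le_mul fun x hx y hy => by
    calc dist (‖f x‖⁻¹ • f x) (‖f y‖⁻¹ • f y) ≤ 2 / (r : ℝ) * dist (f x) (f y) := by
          simpa only [dist_eq_norm] using
            norm_inv_norm_smul_sub_inv_norm_smul_le (NNReal.coe_pos.2 hr) (hfr x hx) (hfr y hy)
      _ ≤ 2 / (r : ℝ) * (K * dist x y) := by grw [hf.dist_le_mul x hx y hy]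
      _ = ↑(2 / r * K) * dist x y := by push_cast; ring

variable {𝕜 E : Type*} [RCLike 𝕜] [NormedAddCommGroup E] [InnerProductSpace 𝕜 E]

theorem norm_inner_smul_sub_inner_smul_le {x₁ x₂ a₁ a₂ : E} (h₁ : ‖x₁‖ ≤ 1) (h₂ : ‖x₂‖ ≤ 1) :
    ‖⟪x₁, a₁⟫_𝕜 • x₁ - ⟪x₂, a₂⟫_𝕜 • x₂‖ ≤ (‖a₁‖ + ‖a₂‖) * ‖x₁ - x₂‖ + ‖a₁ - a₂‖ := by
  have hinner : ‖⟪x₁, a₁⟫_𝕜 - ⟪x₂, a₂⟫_𝕜‖ ≤ ‖x₁ - x₂‖ * ‖a₁‖ + ‖a₁ - a₂‖ := by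
    rw [show ⟪x₁, a₁⟫_𝕜 - ⟪x₂, a₂⟫_𝕜 = ⟪x₁ - x₂, a₁⟫_𝕜 + ⟪x₂, a₁ - a₂⟫_𝕜 by
      rw [inner_sub_left, inner_sub_right]; ring]
    grw [norm_add_le, norm_inner_le_norm, norm_inner_le_norm, h₂, one_mul]
  calc ‖⟪x₁, a₁⟫_𝕜 • x₁ - ⟪x₂, a₂⟫_𝕜 • x₂‖
        = ‖(⟪x₁, a₁⟫_𝕜 - ⟪x₂, a₂⟫_𝕜) • x₁ + ⟪x₂, a₂⟫_𝕜 • (x₁ - x₂)‖ := by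
        congr 1; module
    _ ≤ ‖⟪x₁, a₁⟫_𝕜 - ⟪x₂, a₂⟫_𝕜‖ * ‖x₁‖ + ‖⟪x₂, a₂⟫_𝕜‖ * ‖x₁ - x₂‖ := by
        grw [norm_add_le, norm_smul, norm_smul]
    _ ≤ (‖x₁ - x₂‖ * ‖a₁‖ + ‖a₁ - a₂‖) * 1 + (1 * ‖a₂‖) * ‖x₁ - x₂‖ := by
        grw [hinner, h₁, norm_inner_le_norm, h₂]
    _ = (‖a₁‖ + ‖a₂‖) * ‖x₁ - x₂‖ + ‖a₁ - a₂‖ := by ring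

theorem LipschitzOnWith.inner_smul [PseudoMetricSpace α] {x a : α → E} {Kx Ka M : ℝ≥0}
    (hx : LipschitzOnWith Kx x s) (ha : LipschitzOnWith Ka a s) (hx₁ : ∀ p ∈ s, ‖x p‖ ≤ 1)
    (haM : ∀ p ∈ s, ‖a p‖ ≤ M) :
    LipschitzOnWith (2 * M * Kx + Ka) (fun p => ⟪x p, a p⟫_𝕜 • x p) s :=
  LipschitzOnWith.of_dist_le_mul fun p hp q hq => by
    calc dist (⟪x p, a p⟫_𝕜 • x p) (⟪x q, a q⟫_𝕜 • x q)
        ≤ (‖a p‖ + ‖a q‖) * dist (x p) (x q) + dist (a p) (a q) := by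
          simpa only [dist_eq_norm] using norm_inner_smul_sub_inner_smul_le (hx₁ p hp) (hx₁ q hq)
      _ ≤ (M + M) * (Kx * dist p q) + Ka * dist p q := by
          grw [haM p hp, haM q hq, hx.dist_le_mul p hp q hq, ha.dist_le_mul p hp q hq]
      _ = ↑(2 * M * Kx + Ka) * dist p q := by push_cast; ring

end Lipschitz

section RealGramSchmidt

variable {H : Type*} [NormedAddCommGroup H] [InnerProductSpace ℝ H]

theorem norm_sum_smul_sq {ι : Type*} [Fintype ι] (w : ι → H) (c : ι → ℝ) :
    ‖∑ i, c i • w i‖ ^ 2 = ∑ i, ∑ j, c i * c j * ⟪w i, w j⟫_ℝ := by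
  simp only [← real_inner_self_eq_norm_sq, sum_inner, inner_sum, real_inner_smul_left,
    real_inner_smul_right]
  exact sum_congr rfl fun i _ => sum_congr rfl fun j _ => by rw [real_inner_comm]; ring

variable {ι : Type*} [LinearOrder ι] [LocallyFiniteOrderBot ι] [WellFoundedLT ι]

theorem le_norm_gramSchmidt_sq [Fintype ι] {w : ι → H} {lam : ℝ} (hlam : 0 ≤ lam)
    (hG : ∀ c : ι → ℝ, lam * ∑ i, c i ^ 2 ≤ ‖∑ i, c i • w i‖ ^ 2) (j : ι) :
    lam ≤ ‖gramSchmidt ℝ w j‖ ^ 2 := by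
  obtain ⟨d, hdj, hd⟩ := exists_gramSchmidt_eq_sum_smul (𝕜 := ℝ) w j
  calc lam = lam * d j ^ 2 := by simp [hdj]
    _ ≤ lam * ∑ i, d i ^ 2 := by
        gcongr; exact single_le_sum (fun i _ => sq_nonneg (d i)) (mem_univ j)
    _ ≤ ‖gramSchmidt ℝ w j‖ ^ 2 := hd ▸ hG d

variable {W : Type*} [PseudoMetricSpace W] {s : Set W} {v : W → ι → H}

theorem lipschitzOnWith_gramSchmidt {K K' M : ℝ≥0} {j : ι}
    (hv : LipschitzOnWith K (fun g => v g j) s) (hM : ∀ g ∈ s, ‖v g j‖ ≤ M)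
    (hN : ∀ i < j, LipschitzOnWith K' (fun g => gramSchmidtNormed ℝ (v g) i) s) :
    LipschitzOnWith (K + ∑ _ ∈ Iio j, (2 * M * K' + K)) (fun g => gramSchmidt ℝ (v g) j) s := by
  simp_rw [gramSchmidt_eq_sub_sum_inner_smul (v _) j]
  exact hv.sub <| LipschitzOnWith.finset_sum fun i hi =>
    (hN i (mem_Iio.1 hi)).inner_smul hv (fun g _ => norm_gramSchmidtNormed_le_one _ _) hM

theorem exists_lipschitzOnWith_gramSchmidtNormed {K r : ℝ≥0} {M : ι → ℝ≥0}
    (hv : ∀ i, LipschitzOnWith K (fun g => v g i) s) (hM : ∀ i, ∀ g ∈ s, ‖v g i‖ ≤ M i)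
    (hr : 0 < r) (hlow : ∀ i, ∀ g ∈ s, r ≤ ‖gramSchmidt ℝ (v g) i‖) (j : ι) :
    ∃ K', LipschitzOnWith K' (fun g => gramSchmidtNormed ℝ (v g) j) s := by
  induction j using WellFoundedLT.induction with
  | _ j ih =>
    obtain ⟨K', hK'⟩ := exists_forall_lipschitzOnWith (t := Iio j) fun i hi => ih i (mem_Iio.1 hi)
    exact ⟨_, (lipschitzOnWith_gramSchmidt (hv j) (hM j) fun i hi =>
      hK' i (mem_Iio.2 hi)).inv_norm_smul hr (hlow j)⟩

end RealGramSchmidt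

theorem gramSchmidt_lipschitz_in_parameter_general
    {H : Type*} [NormedAddCommGroup H] [InnerProductSpace ℝ H]
    {W : Type*} [MetricSpace W]
    {n : ℕ} (v : W → Fin n → H) (L lam : ℝ)
    (hlam : 0 < lam)
    (hLip : ∀ j : Fin n, ∀ g₁ g₂ : W,
        ‖v g₁ j - v g₂ j‖ ≤ L * dist g₁ g₂)
    (hGram : ∀ g : W, ∀ c : Fin n → ℝ,
        lam * ∑ i, (c i) ^ 2 ≤
          ∑ i, ∑ j, c i * c j * (inner ℝ (v g i) (v g j) : ℝ)) :
    haveI : WellFoundedLT (Fin n) := inferInstance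
    ∀ g₀ : W, ∃ ε > 0, ∃ C : ℝ,
      ∀ g₁ g₂ : W, dist g₁ g₀ < ε → dist g₂ g₀ < ε →
        ∀ j : Fin n,
          ‖InnerProductSpace.gramSchmidtNormed ℝ (v g₁) j - InnerProductSpace.gramSchmidtNormed ℝ (v g₂) j‖
            ≤ C * dist g₁ g₂ := by
  intro g₀
  have hv (j : Fin n) : LipschitzWith L.toNNReal (fun g => v g j) :=
    LipschitzWith.of_dist_le' fun g₁ g₂ => by simpa only [dist_eq_norm] using hLip j g₁ g₂
  have hM (j : Fin n) :
      ∀ g ∈ Metric.ball g₀ 1, ‖v g j‖ ≤ ((‖v g₀ j‖₊ + L.toNNReal : ℝ≥0) : ℝ) := fun g hg => by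
    grw [(hv j).norm_le_norm_add_mul_dist g g₀, (Metric.mem_ball.1 hg).le, mul_one]
    simp
  have hlow (j : Fin n) : ∀ g ∈ Metric.ball g₀ 1,
      (⟨√lam, Real.sqrt_nonneg lam⟩ : ℝ≥0) ≤ ‖gramSchmidt ℝ (v g) j‖ := fun g _ =>
    (Real.sqrt_le_left (norm_nonneg _)).2 <| le_norm_gramSchmidt_sq hlam.le
      (fun c => by rw [norm_sum_smul_sq]; exact hGram g c) j
  obtain ⟨C, hC⟩ := exists_forall_lipschitzOnWith (t := univ) fun j _ =>
    exists_lipschitzOnWith_gramSchmidtNormed (fun i => (hv i).lipschitzOnWith) hM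
      (Real.sqrt_pos.2 hlam) hlow j
  refine ⟨1, one_pos, C, fun g₁ g₂ h₁ h₂ j => ?_⟩
  rw [← dist_eq_norm]
  exact (hC j (mem_univ j)).dist_le_mul g₁ h₁ g₂ h₂

theorem gramSchmidt_lipschitz_in_parameter
    {H : Type*} [NormedAddCommGroup H] [InnerProductSpace ℝ H]
    {W : Type*} [MetricSpace W]
    {n : ℕ} [NeZero n] (v : W → Fin n → H) (L lam : ℝ)
    (hlam : 0 < lam)
    (hLip : ∀ j : Fin n, ∀ g₁ g₂ : W,
        ‖v g₁ j - v g₂ j‖ ≤ L * dist g₁ g₂)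
    (hGram : ∀ g : W, ∀ c : Fin n → ℝ,
        lam * ∑ i, (c i) ^ 2 ≤
          ∑ i, ∑ j, c i * c j * (inner ℝ (v g i) (v g j) : ℝ)) :
    haveI : WellFoundedLT (Fin n) := inferInstance
    ∀ g₀ : W, ∃ ε > 0, ∃ C : ℝ,
      ∀ g₁ g₂ : W, dist g₁ g₀ < ε → dist g₂ g₀ < ε →
        ∀ j : Fin n,
          ‖InnerProductSpace.gramSchmidtNormed ℝ (v g₁) j - InnerProductSpace.gramSchmidtNormed ℝ (v g₂) j‖
            ≤ C * dist g₁ g₂ :=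
  gramSchmidt_lipschitz_in_parameter_general v L lam hlam hLip hGram
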